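/- arXiv:1112.5688 — 2 statements merged into one kernel-verified Lean document; each statement's English description precedes it below -/
import Mathlib

section
/- Let X be a normed space, F ⊆ X nonempty closed convex, and Q ⊆ X nonempty convex. Then the minimal time function T_Q^F(x) = inf{t ≥ 0 : (x + t•F) ∩ Q ≠ ∅} is a convex function on X (with values in [0, ∞]). -/
/-!
If `x + t • f ∈ Q` and `y + s • g ∈ Q` with `f, g ∈ F`, convexity of `Q` puts the combination
`a • (x + t • f) + b • (y + s • g) = (a • x + b • y) + (a * t) • f + (b * s) • g` in `Q`, and
convexity of `F` gives `(a * t) • F + (b * s) • F = (a * t + b * s) • F`. So `a * t + b * s` is a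
feasible time at `a • x + b • y`, and taking infima over `t` and `s` gives convexity of `minTime`.
-/

open scoped ENNReal Pointwise

/-- The minimal time function `T_Q^F`. -/
noncomputable def minTime {X : Type*} [NormedAddCommGroup X] [NormedSpace ℝ X]
    (F Q : Set X) (x : X) : ℝ≥0∞ :=
  sInf (ENNReal.ofReal '' {t : ℝ | 0 ≤ t ∧ ∃ f ∈ F, x + t • f ∈ Q})

namespace ENNReal

lemma le_mul_iInf_add_mul_iInf {ι κ : Sort*} {f : ι → ℝ≥0∞} {g : κ → ℝ≥0∞} {a b c : ℝ≥0∞}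
    (ha₀ : a ≠ 0) (ha : a ≠ ∞) (hb₀ : b ≠ 0) (hb : b ≠ ∞) (h : ∀ i j, c ≤ a * f i + b * g j) :
    c ≤ a * (⨅ i, f i) + b * ⨅ j, g j := by
  rw [mul_iInf_of_ne ha₀ ha, mul_iInf_of_ne hb₀ hb]
  exact le_iInf_add_iInf h

end ENNReal

section FeasibleTimes

variable {E : Type*} [AddCommGroup E] [Module ℝ E]

def feasibleTimes (F Q : Set E) (x : E) : Set ℝ :=
  {t | 0 ≤ t ∧ ∃ f ∈ F, x + t • f ∈ Q}

lemma add_mul_mem_feasibleTimes {F Q : Set E} (hF : Convex ℝ F) (hQ : Convex ℝ Q)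
    {x y : E} {a b t s : ℝ} (ha : 0 ≤ a) (hb : 0 ≤ b) (hab : a + b = 1)
    (ht : t ∈ feasibleTimes F Q x) (hs : s ∈ feasibleTimes F Q y) :
    a * t + b * s ∈ feasibleTimes F Q (a • x + b • y) := by
  obtain ⟨ht₀, f, hf, hxf⟩ := ht
  obtain ⟨hs₀, g, hg, hyg⟩ := hs
  have hat : 0 ≤ a * t := mul_nonneg ha ht₀
  have hbs : 0 ≤ b * s := mul_nonneg hb hs₀
  have hcomb : (a * t) • f + (b * s) • g ∈ (a * t + b * s) • F := by
    rw [hF.add_smul hat hbs]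
    exact Set.add_mem_add (Set.smul_mem_smul_set hf) (Set.smul_mem_smul_set hg)
  obtain ⟨h, hh, hh_eq⟩ := Set.mem_smul_set.mp hcomb
  refine ⟨add_nonneg hat hbs, h, hh, ?_⟩
  convert hQ hxf hyg ha hb hab using 1
  rw [hh_eq, smul_add, smul_add, smul_smul, smul_smul]
  abel

end FeasibleTimes

section MinTime

variable {X : Type*} [NormedAddCommGroup X] [NormedSpace ℝ X] {F Q : Set X} {x : X}

lemma minTime_eq_iInf (F Q : Set X) (x : X) :
    minTime F Q x = ⨅ t : feasibleTimes F Q x, ENNReal.ofReal t :=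
  sInf_image'

lemma minTime_le_ofReal {t : ℝ} (ht : t ∈ feasibleTimes F Q x) :
    minTime F Q x ≤ ENNReal.ofReal t :=
  sInf_le (Set.mem_image_of_mem _ ht)

end MinTime

theorem minTime_convex_general {X : Type*} [NormedAddCommGroup X] [NormedSpace ℝ X]
    (F : Set X) (hFconv : Convex ℝ F)
    (Q : Set X) (hQconv : Convex ℝ Q) :
    ∀ x y : X, ∀ a b : ℝ, 0 ≤ a → 0 ≤ b → a + b = 1 →
      minTime F Q (a • x + b • y) ≤
        ENNReal.ofReal a * minTime F Q x + ENNReal.ofReal b * minTime F Q y := by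
  intro x y a b ha hb hab
  -- a zero weight cannot be pushed inside the infimum, since `0 * ∞ = 0`
  rcases ha.eq_or_lt with rfl | ha₀
  · simp [show b = 1 by linarith]
  rcases hb.eq_or_lt with rfl | hb₀
  · simp [show a = 1 by linarith]
  rw [minTime_eq_iInf F Q x, minTime_eq_iInf F Q y]
  refine ENNReal.le_mul_iInf_add_mul_iInf (by simpa using ha₀) ENNReal.ofReal_ne_top
    (by simpa using hb₀) ENNReal.ofReal_ne_top fun ⟨t, ht⟩ ⟨s, hs⟩ => ?_
  calc minTime F Q (a • x + b • y)
      ≤ ENNReal.ofReal (a * t + b * s) :=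
        minTime_le_ofReal (add_mul_mem_feasibleTimes hFconv hQconv ha hb hab ht hs)
    _ = ENNReal.ofReal a * ENNReal.ofReal t + ENNReal.ofReal b * ENNReal.ofReal s := by
        rw [ENNReal.ofReal_add (mul_nonneg ha ht.1) (mul_nonneg hb hs.1),
          ENNReal.ofReal_mul ha, ENNReal.ofReal_mul hb]

theorem minTime_convex {X : Type*} [NormedAddCommGroup X] [NormedSpace ℝ X]
    (F : Set X) (hFne : F.Nonempty) (hFcl : IsClosed F) (hFconv : Convex ℝ F)
    (Q : Set X) (hQne : Q.Nonempty) (hQconv : Convex ℝ Q) :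
    ∀ x y : X, ∀ a b : ℝ, 0 ≤ a → 0 ≤ b → a + b = 1 →
      minTime F Q (a • x + b • y) ≤
        ENNReal.ofReal a * minTime F Q x + ENNReal.ofReal b * minTime F Q y :=
  minTime_convex_general F hFconv Q hQconv
end

section
/- Let X be a normed space and F ⊆ X a nonempty closed convex set containing the origin. Then ρ_F(x) = 0 if and only if x ∈ F_∞, where ρ_F(x) = inf{t ≥ 0 : x ∈ t•F} and F_∞ is the asymptotic cone of F. -/
open scoped ENNReal Pointwise

/-- The asymptotic cone of `F` at base point `x`. -/
def asympCone {X : Type*} [NormedAddCommGroup X] [NormedSpace ℝ X]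
    (F : Set X) (x : X) : Set X :=
  {d | ∀ t : ℝ, 0 < t → x + t • d ∈ F}

/-- The generalized Minkowski function of `F`. -/
noncomputable def mink {X : Type*} [NormedAddCommGroup X] [NormedSpace ℝ X]
    (F : Set X) (u : X) : ℝ≥0∞ :=
  sInf (ENNReal.ofReal '' {t : ℝ | 0 ≤ t ∧ ∃ f ∈ F, u = t • f})

section Mink

variable {X : Type*} [NormedAddCommGroup X] [NormedSpace ℝ X] {F : Set X}

theorem mem_asympCone_zero_iff {d : X} : d ∈ asympCone F 0 ↔ ∀ t : ℝ, 0 < t → t • d ∈ F := by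
  simp only [asympCone, Set.mem_ofPred_eq, zero_add]

theorem mink_smul_le {t : ℝ} (ht : 0 ≤ t) {f : X} (hf : f ∈ F) :
    mink F (t • f) ≤ ENNReal.ofReal t :=
  sInf_le ⟨t, ⟨ht, f, hf, rfl⟩, rfl⟩

/-- For convex `F ∋ 0` the sets `t • F` increase with `t`, so a value of `mink` below `s`
already places `x` in `s • F`. -/
theorem Convex.inv_smul_mem_of_mink_lt (hF : Convex ℝ F) (h0 : (0 : X) ∈ F) {x : X} {s : ℝ}
    (h : mink F x < ENNReal.ofReal s) : s⁻¹ • x ∈ F := by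
  obtain ⟨_, ⟨t, ⟨ht0, f, hf, rfl⟩, rfl⟩, hts⟩ := sInf_lt_iff.mp h
  have hs : 0 < s := ENNReal.ofReal_pos.mp (pos_of_gt hts)
  have hts : t ≤ s := ((ENNReal.ofReal_lt_ofReal_iff hs).mp hts).le
  rw [smul_smul]
  exact hF.smul_mem_of_zero_mem h0 hf
    ⟨by positivity, by rwa [inv_mul_le_one₀ hs]⟩

end Mink

theorem mink_eq_zero_iff_general {X : Type*} [NormedAddCommGroup X] [NormedSpace ℝ X]
    (F : Set X) (hFconv : Convex ℝ F)
    (h0F : (0 : X) ∈ F) (x : X) :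
    mink F x = 0 ↔ x ∈ asympCone F 0 := by
  rw [mem_asympCone_zero_iff]
  constructor
  · intro h s hs
    have hlt : mink F x < ENNReal.ofReal s⁻¹ := by
      rw [h]
      exact ENNReal.ofReal_pos.mpr (inv_pos.mpr hs)
    simpa using hFconv.inv_smul_mem_of_mink_lt h0F hlt
  · intro hx
    refine nonpos_iff_eq_zero.mp (ENNReal.le_of_forall_pos_le_add fun ε hε _ => ?_)
    have hε : (0 : ℝ) < ε := hε
    calc mink F x = mink F ((ε : ℝ) • ((ε : ℝ)⁻¹ • x)) := by rw [smul_inv_smul₀ hε.ne']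
      _ ≤ ENNReal.ofReal ε := mink_smul_le hε.le (hx _ (inv_pos.mpr hε))
      _ = 0 + ε := by rw [zero_add, ENNReal.ofReal_coe_nnreal]

theorem mink_eq_zero_iff {X : Type*} [NormedAddCommGroup X] [NormedSpace ℝ X]
    (F : Set X) (hFne : F.Nonempty) (hFcl : IsClosed F) (hFconv : Convex ℝ F)
    (h0F : (0 : X) ∈ F) (x : X) :
    mink F x = 0 ↔ x ∈ asympCone F 0 :=
  mink_eq_zero_iff_general F hFconv h0F x
end
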